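/- Let u, v : ℝ² → ℝ be smooth functions of (x,t₁) solving the first commuting flow u_{t₁} = Q₁ᵘ, v_{t₁} = Q₁ᵛ, and suppose there is a compact set K ⊆ ℝ such that for every t₁ the functions x ↦ u(x,t₁) and x ↦ v(x,t₁) are supported in K. Then the function t₁ ↦ ∫_ℝ [(7/162)v³ − (8/3)u³ − (5/9)v²u + (20/9)u²v − (u_x)² + (5/9)u_x v_x − (2/27)(v_x)²] dx is constant; that is, ℋ₂ = ∫ H₂ dx is a conserved quantity of the first commuting flow. -/

import Mathlib

open MeasureTheory Function Set

/-- First component `Q₁ᵘ` of the first commuting flow of the KKS hierarchy. -/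
noncomputable def Q1u (u v : ℝ → ℝ) (x : ℝ) : ℝ :=
  2 * iteratedDeriv 5 u x - (5 / 9) * iteratedDeriv 5 v x
    - 20 * u x * iteratedDeriv 3 u x + (50 / 9) * u x * iteratedDeriv 3 v x
    + (40 / 9) * v x * iteratedDeriv 3 u x - (10 / 9) * v x * iteratedDeriv 3 v x
    - 50 * deriv u x * iteratedDeriv 2 u x + (125 / 9) * deriv u x * iteratedDeriv 2 v x
    + (40 / 3) * deriv v x * iteratedDeriv 2 u x - (10 / 3) * deriv v x * iteratedDeriv 2 v x
    - (40 / 3) * u x * v x * deriv u x + (20 / 9) * u x * v x * deriv v x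
    + 40 * (u x) ^ 2 * deriv u x - (80 / 9) * (u x) ^ 2 * deriv v x
    + (5 / 9) * (v x) ^ 2 * deriv u x

/-- Second component `Q₁ᵛ` of the first commuting flow of the KKS hierarchy. -/
noncomputable def Q1v (u v : ℝ → ℝ) (x : ℝ) : ℝ :=
  5 * iteratedDeriv 5 u x - (4 / 3) * iteratedDeriv 5 v x
    - 40 * u x * iteratedDeriv 3 u x + 10 * u x * iteratedDeriv 3 v x
    + (10 / 3) * v x * iteratedDeriv 3 u x - (5 / 9) * v x * iteratedDeriv 3 v x
    - 120 * deriv u x * iteratedDeriv 2 u x + 30 * deriv u x * iteratedDeriv 2 v x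
    + (80 / 3) * deriv v x * iteratedDeriv 2 u x - (55 / 9) * deriv v x * iteratedDeriv 2 v x
    + (160 / 3) * u x * v x * deriv u x - 20 * u x * v x * deriv v x
    + (40 / 3) * (u x) ^ 2 * deriv v x - (40 / 3) * (v x) ^ 2 * deriv u x
    + (35 / 9) * (v x) ^ 2 * deriv v x


set_option maxRecDepth 100000
set_option maxHeartbeats 1000000
noncomputable def pdx (F : ℝ → ℝ → ℝ) : ℝ → ℝ → ℝ := fun x t => deriv (fun y => F y t) x
noncomputable def pdt (F : ℝ → ℝ → ℝ) : ℝ → ℝ → ℝ := fun x t => deriv (fun s => F x s) t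

theorem hasDerivAt_slice_x {F : ℝ → ℝ → ℝ} (hF : ContDiff ℝ (⊤ : ℕ∞) (uncurry F)) (x t : ℝ) :
    HasDerivAt (fun y => F y t) (fderiv ℝ (uncurry F) (x, t) (1, 0)) x := by
  have hfd : HasFDerivAt (uncurry F) (fderiv ℝ (uncurry F) (x, t)) (x, t) :=
    (hF.differentiable (by simp) (x, t)).hasFDerivAt
  have hline : HasDerivAt (fun y : ℝ => (y, t)) ((1 : ℝ), (0 : ℝ)) x :=
    (hasDerivAt_id x).prodMk (hasDerivAt_const x t)
  exact hfd.comp_hasDerivAt x hline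

theorem hasDerivAt_slice_t {F : ℝ → ℝ → ℝ} (hF : ContDiff ℝ (⊤ : ℕ∞) (uncurry F)) (x t : ℝ) :
    HasDerivAt (fun s => F x s) (fderiv ℝ (uncurry F) (x, t) (0, 1)) t := by
  have hfd : HasFDerivAt (uncurry F) (fderiv ℝ (uncurry F) (x, t)) (x, t) :=
    (hF.differentiable (by simp) (x, t)).hasFDerivAt
  have hline : HasDerivAt (fun s : ℝ => (x, s)) ((0 : ℝ), (1 : ℝ)) t :=
    (hasDerivAt_const t x).prodMk (hasDerivAt_id t)
  exact hfd.comp_hasDerivAt t hline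

theorem pdx_eq {F : ℝ → ℝ → ℝ} (hF : ContDiff ℝ (⊤ : ℕ∞) (uncurry F)) (x t : ℝ) :
    pdx F x t = fderiv ℝ (uncurry F) (x, t) (1, 0) := (hasDerivAt_slice_x hF x t).deriv

theorem pdt_eq {F : ℝ → ℝ → ℝ} (hF : ContDiff ℝ (⊤ : ℕ∞) (uncurry F)) (x t : ℝ) :
    pdt F x t = fderiv ℝ (uncurry F) (x, t) (0, 1) := (hasDerivAt_slice_t hF x t).deriv

theorem contDiff_pdx {F : ℝ → ℝ → ℝ} (hF : ContDiff ℝ (⊤ : ℕ∞) (uncurry F)) :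
    ContDiff ℝ (⊤ : ℕ∞) (uncurry (pdx F)) := by
  have : uncurry (pdx F) = fun p : ℝ × ℝ => fderiv ℝ (uncurry F) p (1, 0) := by
    funext p; exact pdx_eq hF p.1 p.2
  rw [this]
  exact (hF.fderiv_right (by simp)).clm_apply contDiff_const

-- mixed partials: pdt (pdx F) = second fderiv applied
theorem clairaut {F : ℝ → ℝ → ℝ} (hF : ContDiff ℝ (⊤ : ℕ∞) (uncurry F)) (x t : ℝ) :
    pdt (pdx F) x t = pdx (pdt F) x t := by
  have hsym : IsSymmSndFDerivAt ℝ (uncurry F) (x, t) :=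
    hF.contDiffAt.isSymmSndFDerivAt (by rw [minSmoothness_of_isRCLikeNormedField]; exact WithTop.coe_le_coe.mpr le_top)
  have hd2 : DifferentiableAt ℝ (fderiv ℝ (uncurry F)) (x, t) :=
    ((hF.fderiv_right (m := 1) (by exact WithTop.coe_le_coe.mpr le_top)).differentiable one_ne_zero) (x, t)
  -- compute pdt (pdx F)
  have e1 : pdt (pdx F) x t = fderiv ℝ (fderiv ℝ (uncurry F)) (x, t) (0, 1) (1, 0) := by
    have h1 : HasDerivAt (fun s => pdx F x s)
        (fderiv ℝ (fderiv ℝ (uncurry F)) (x, t) (0, 1) (1, 0)) t := by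
      have hline : HasDerivAt (fun s : ℝ => ((x, s) : ℝ × ℝ)) ((0 : ℝ), (1 : ℝ)) t :=
        (hasDerivAt_const t x).prodMk (hasDerivAt_id t)
      have hcomp : HasDerivAt (fun s => fderiv ℝ (uncurry F) (x, s))
          (fderiv ℝ (fderiv ℝ (uncurry F)) (x, t) (0, 1)) t :=
        hd2.hasFDerivAt.comp_hasDerivAt t hline
      have happ := hcomp.clm_apply (hasDerivAt_const t ((1 : ℝ), (0 : ℝ)))
      simp only [map_zero, add_zero] at happ
      have : (fun s => fderiv ℝ (uncurry F) (x, s) ((1:ℝ), (0:ℝ)))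
          = fun s => pdx F x s := by
        funext s; exact (pdx_eq hF x s).symm
      rwa [this] at happ
    exact h1.deriv
  have e2 : pdx (pdt F) x t = fderiv ℝ (fderiv ℝ (uncurry F)) (x, t) (1, 0) (0, 1) := by
    have h1 : HasDerivAt (fun y => pdt F y t)
        (fderiv ℝ (fderiv ℝ (uncurry F)) (x, t) (1, 0) (0, 1)) x := by
      have hline : HasDerivAt (fun y : ℝ => ((y, t) : ℝ × ℝ)) ((1 : ℝ), (0 : ℝ)) x :=
        (hasDerivAt_id x).prodMk (hasDerivAt_const x t)
      have hcomp : HasDerivAt (fun y => fderiv ℝ (uncurry F) (y, t))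
          (fderiv ℝ (fderiv ℝ (uncurry F)) (x, t) (1, 0)) x :=
        hd2.hasFDerivAt.comp_hasDerivAt x hline
      have happ := hcomp.clm_apply (hasDerivAt_const x ((0 : ℝ), (1 : ℝ)))
      simp only [map_zero, add_zero] at happ
      have : (fun y => fderiv ℝ (uncurry F) (y, t) ((0:ℝ), (1:ℝ)))
          = fun y => pdt F y t := by
        funext y; exact (pdt_eq hF y t).symm
      rwa [this] at happ
    exact h1.deriv
  rw [e1, e2, hsym]
theorem hasDerivAt_pdx {F : ℝ → ℝ → ℝ} (hF : ContDiff ℝ (⊤ : ℕ∞) (uncurry F)) (x t : ℝ) :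
    HasDerivAt (fun y => F y t) (pdx F x t) x := (pdx_eq hF x t) ▸ hasDerivAt_slice_x hF x t

theorem hasDerivAt_pdt {F : ℝ → ℝ → ℝ} (hF : ContDiff ℝ (⊤ : ℕ∞) (Function.uncurry F)) (x t : ℝ) :
    HasDerivAt (fun s => F x s) (pdt F x t) t := (pdt_eq hF x t) ▸ hasDerivAt_slice_t hF x t

noncomputable def A (u : ℝ → ℝ → ℝ) : ℕ → ℝ → ℝ → ℝ := fun n => pdx^[n] u

theorem A_zero (u : ℝ → ℝ → ℝ) : A u 0 = u := rfl
theorem A_succ (u : ℝ → ℝ → ℝ) (n : ℕ) : A u (n + 1) = pdx (A u n) :=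
  Function.iterate_succ_apply' pdx n u

theorem contDiff_A {u : ℝ → ℝ → ℝ} (hu : ContDiff ℝ (⊤ : ℕ∞) (uncurry u)) :
    ∀ n, ContDiff ℝ (⊤ : ℕ∞) (uncurry (A u n)) := by
  intro n; induction n with
  | zero => exact hu
  | succ n ih => rw [A_succ]; exact contDiff_pdx ih

theorem hasDerivAt_A_x {u : ℝ → ℝ → ℝ} (hu : ContDiff ℝ (⊤ : ℕ∞) (uncurry u)) (n : ℕ) (x t : ℝ) :
    HasDerivAt (fun y => A u n y t) (A u (n + 1) x t) x := by
  rw [A_succ]; exact hasDerivAt_pdx (contDiff_A hu n) x t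

theorem iteratedDeriv_slice {u : ℝ → ℝ → ℝ} (hu : ContDiff ℝ (⊤ : ℕ∞) (uncurry u)) :
    ∀ (n : ℕ) (x t : ℝ), iteratedDeriv n (fun y => u y t) x = A u n x t := by
  intro n
  induction n with
  | zero => intro x t; rfl
  | succ n ih =>
    intro x t
    rw [iteratedDeriv_succ]
    have : deriv (iteratedDeriv n (fun y => u y t)) x
        = deriv (fun y => A u n y t) x := by
      congr 1; funext y; exact ih y t
    rw [this]
    exact (hasDerivAt_A_x hu n x t).deriv

theorem support_A {u : ℝ → ℝ → ℝ} {K : Set ℝ} (hK : IsClosed K)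
    (hsupp : ∀ t, (Function.support fun x => u x t) ⊆ K) :
    ∀ n t, (Function.support fun x => A u n x t) ⊆ K := by
  intro n
  induction n with
  | zero => exact hsupp
  | succ n ih =>
    intro t
    rw [A_succ]
    have : (fun x => pdx (A u n) x t) = deriv (fun x => A u n x t) := rfl
    rw [this]
    exact (support_deriv_subset).trans
      ((closure_minimal (ih t) hK) : tsupport (fun x => A u n x t) ⊆ K)
noncomputable def QU (u v : ℝ → ℝ → ℝ) : ℝ → ℝ → ℝ := fun x t =>
  ((-5 : ℝ) / 9) * (A v 5 x t) + ((-10 : ℝ) / 3) * (A v 1 x t * A v 2 x t) + ((-10 : ℝ) / 9) * (A v 0 x t * A v 3 x t) + ((2 : ℝ)) * (A u 5 x t) + ((40 : ℝ) / 9) * (A u 3 x t * A v 0 x t) + ((40 : ℝ) / 3) * (A u 2 x t * A v 1 x t) + ((125 : ℝ) / 9) * (A u 1 x t * A v 2 x t) + ((5 : ℝ) / 9) * (A u 1 x t * A v 0 x t * A v 0 x t) + ((-50 : ℝ)) * (A u 1 x t * A u 2 x t) + ((50 : ℝ) / 9) * (A u 0 x t * A v 3 x t) + ((20 : ℝ)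 / 9) * (A u 0 x t * A v 0 x t * A v 1 x t) + ((-20 : ℝ)) * (A u 0 x t * A u 3 x t) + ((-40 : ℝ) / 3) * (A u 0 x t * A u 1 x t * A v 0 x t) + ((-80 : ℝ) / 9) * (A u 0 x t * A u 0 x t * A v 1 x t) + ((40 : ℝ)) * (A u 0 x t * A u 0 x t * A u 1 x t)

noncomputable def QV (u v : ℝ → ℝ → ℝ) : ℝ → ℝ → ℝ := fun x t =>
  ((-4 : ℝ) / 3) * (A v 5 x t) + ((-55 : ℝ) / 9) * (A v 1 x t * A v 2 x t) + ((-5 : ℝ) / 9) * (A v 0 x t * A v 3 x t) + ((35 : ℝ) / 9) * (A v 0 x t * A v 0 x t * A v 1 x t) + ((5 : ℝ)) * (A u 5 x t) + ((10 : ℝ) / 3) * (A u 3 x t * A v 0 x t) + ((80 : ℝ) / 3) * (A u 2 x t * A v 1 x t) + ((30 : ℝ)) * (A u 1 x t * A v 2 x t) + ((-40 : ℝ) / 3) * (A u 1 x t * A v 0 x t * A v 0 x t) + ((-120 : ℝ)) * (A u 1 x t * A u 2 x t) + ((10 : ℝ)) * (A u 0 x t * A v 3 x t) + ((-20 : ℝ))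 * (A u 0 x t * A v 0 x t * A v 1 x t) + ((-40 : ℝ)) * (A u 0 x t * A u 3 x t) + ((160 : ℝ) / 3) * (A u 0 x t * A u 1 x t * A v 0 x t) + ((40 : ℝ) / 3) * (A u 0 x t * A u 0 x t * A v 1 x t)

noncomputable def QU' (u v : ℝ → ℝ → ℝ) : ℝ → ℝ → ℝ := fun x t =>
  ((-5 : ℝ) / 9) * A v 6 x t + ((-10 : ℝ) / 3) * (A v 2 x t * A v 2 x t + A v 1 x t * A v 3 x t) + ((-10 : ℝ) / 9) * (A v 1 x t * A v 3 x t + A v 0 x t * A v 4 x t) + ((2 : ℝ)) * A u 6 x t + ((40 : ℝ) / 9) * (A u 4 x t * A v 0 x t + A u 3 x t * A v 1 x t) + ((40 : ℝ) / 3) * (A u 3 x t * A v 1 x t + A u 2 x t * A v 2 x t) + ((125 : ℝ) / 9) * (A u 2 x t * A v 2 x t + A u 1 x t * A v 3 x t) + ((5 : ℝ) / 9) * ((A u 2 x t * A v 0 x t + A u 1 x t * A v 1 x t) * A v 0 x t + A u 1 x t * A v 0 x t * A v 1 x t) + ((-50 : ℝ)) * (A u 2 x t * A u 2 x t + A u 1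 x t * A u 3 x t) + ((50 : ℝ) / 9) * (A u 1 x t * A v 3 x t + A u 0 x t * A v 4 x t) + ((20 : ℝ) / 9) * ((A u 1 x t * A v 0 x t + A u 0 x t * A v 1 x t) * A v 1 x t + A u 0 x t * A v 0 x t * A v 2 x t) + ((-20 : ℝ)) * (A u 1 x t * A u 3 x t + A u 0 x t * A u 4 x t) + ((-40 : ℝ) / 3) * ((A u 1 x t * A u 1 x t + A u 0 x t * A u 2 x t) * A v 0 x t + A u 0 x t * A u 1 x t * A v 1 x t) + ((-80 : ℝ) / 9) * ((A u 1 x t * A u 0 x t + A u 0 x t * A u 1 x t) * A v 1 x t + A u 0 x t * A u 0 x t * A v 2 x t) + ((40 : ℝ)) * ((A u 1 x t * A u 0 x t + A u 0 x t * A u 1 x t) * A u 1 x t + A u 0 x t * A u 0 x t * A u 2 x t)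

noncomputable def QV' (u v : ℝ → ℝ → ℝ) : ℝ → ℝ → ℝ := fun x t =>
  ((-4 : ℝ) / 3) * A v 6 x t + ((-55 : ℝ) / 9) * (A v 2 x t * A v 2 x t + A v 1 x t * A v 3 x t) + ((-5 : ℝ) / 9) * (A v 1 x t * A v 3 x t + A v 0 x t * A v 4 x t) + ((35 : ℝ) / 9) * ((A v 1 x t * A v 0 x t + A v 0 x t * A v 1 x t) * A v 1 x t + A v 0 x t * A v 0 x t * A v 2 x t) + ((5 : ℝ)) * A u 6 x t + ((10 : ℝ) / 3) * (A u 4 x t * A v 0 x t + A u 3 x t * A v 1 x t) + ((80 : ℝ) / 3) * (A u 3 x t * A v 1 x t + A u 2 x t * A v 2 x t) + ((30 : ℝ)) * (A u 2 x t * A v 2 x t + A u 1 x t * A v 3 x t) + ((-40 : ℝ) / 3) * ((A u 2 x t * A v 0 x t + A u 1 x t * A v 1 x t) * A v 0 x t + A u 1 x t * A v 0 x t * A v 1 x t) + ((-120 : ℝ)) * (A u 2 x t * A u 2 x t + A u 1 x t * A u 3 x t) + ((10 : ℝ)) * (A u 1 x t * A v 3 x t + A u 0 x t * A v 4 x t)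 + ((-20 : ℝ)) * ((A u 1 x t * A v 0 x t + A u 0 x t * A v 1 x t) * A v 1 x t + A u 0 x t * A v 0 x t * A v 2 x t) + ((-40 : ℝ)) * (A u 1 x t * A u 3 x t + A u 0 x t * A u 4 x t) + ((160 : ℝ) / 3) * ((A u 1 x t * A u 1 x t + A u 0 x t * A u 2 x t) * A v 0 x t + A u 0 x t * A u 1 x t * A v 1 x t) + ((40 : ℝ) / 3) * ((A u 1 x t * A u 0 x t + A u 0 x t * A u 1 x t) * A v 1 x t + A u 0 x t * A u 0 x t * A v 2 x t)

noncomputable def HH (u v : ℝ → ℝ → ℝ) : ℝ → ℝ → ℝ := fun x t =>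
  ((-2 : ℝ) / 27) * (A v 1 x t * A v 1 x t) + ((7 : ℝ) / 162) * (A v 0 x t * A v 0 x t * A v 0 x t) + ((5 : ℝ) / 9) * (A u 1 x t * A v 1 x t) + ((-1 : ℝ)) * (A u 1 x t * A u 1 x t) + ((-5 : ℝ) / 9) * (A u 0 x t * A v 0 x t * A v 0 x t) + ((20 : ℝ) / 9) * (A u 0 x t * A u 0 x t * A v 0 x t) + ((-8 : ℝ) / 3) * (A u 0 x t * A u 0 x t * A u 0 x t)

noncomputable def GG (u v : ℝ → ℝ → ℝ) : ℝ → ℝ → ℝ := fun x t =>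
  ((-1 : ℝ) / 18) * (A v 3 x t * A v 3 x t) + ((1 : ℝ) / 9) * (A v 2 x t * A v 4 x t) + ((-1 : ℝ) / 9) * (A v 1 x t * A v 5 x t) + ((-164 : ℝ) / 243) * (A v 1 x t * A v 1 x t * A v 2 x t) + ((98 : ℝ) / 243) * (A v 0 x t * A v 2 x t * A v 2 x t) + ((-196 : ℝ) / 243) * (A v 0 x t * A v 1 x t * A v 3 x t) + ((11 : ℝ) / 81) * (A v 0 x t * A v 0 x t * A v 4 x t) + ((-140 : ℝ) / 243) * (A v 0 x t * A v 0 x t * A v 1 x t * A v 1 x t) + ((265 : ℝ) / 486) * (A v 0 x t * A v 0 x t * A v 0 x t * A v 2 x t) + ((49 : ℝ) / 486) * (A v 0 x t * A v 0 x t * A v 0 x t * A v 0 x t * A v 0 x t) + ((10 : ℝ) / 27) * (A u 5 x t * A v 1 x t) + ((-10 : ℝ) / 27) * (A u 4 x t * A v 2 x t) + ((-25 : ℝ) / 54) * (A u 4 x t * A v 0 x t * A v 0 x t) + ((10 : ℝ) / 27) * (A u 3 x t * A v 3 x t) + ((235 : ℝ) / 81) * (A u 3 x t * A v 0 x t * A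 v 1 x t) + ((-11 : ℝ) / 18) * (A u 3 x t * A u 3 x t) + ((-10 : ℝ) / 27) * (A u 2 x t * A v 4 x t) + ((205 : ℝ) / 81) * (A u 2 x t * A v 1 x t * A v 1 x t) + ((-235 : ℝ) / 81) * (A u 2 x t * A v 0 x t * A v 2 x t) + ((-55 : ℝ) / 27) * (A u 2 x t * A v 0 x t * A v 0 x t * A v 0 x t) + ((11 : ℝ) / 9) * (A u 2 x t * A u 4 x t) + ((140 : ℝ) / 27) * (A u 2 x t * A u 2 x t * A v 0 x t) + ((10 : ℝ) / 27) * (A u 1 x t * A v 5 x t) + ((370 : ℝ) / 81) * (A u 1 x t * A v 1 x t * A v 2 x t) + ((235 : ℝ) / 81) * (A u 1 x t * A v 0 x t * A v 3 x t) + ((40 : ℝ) / 9) * (A u 1 x t * A v 0 x t * A v 0 x t * A v 1 x t) + ((-11 : ℝ) / 9) * (A u 1 x t * A u 5 x t) + ((-280 : ℝ) / 27) * (A u 1 x t * A u 3 x t * A v 0 x t) + ((-410 : ℝ) / 27) * (A u 1 x t * A u 2 x t * A v 1 x t) + ((-220 : ℝ) / 27) * (A u 1 x t * A u 1 x t * A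 v 2 x t) + ((-740 : ℝ) / 81) * (A u 1 x t * A u 1 x t * A v 0 x t * A v 0 x t) + ((212 : ℝ) / 9) * (A u 1 x t * A u 1 x t * A u 2 x t) + ((-35 : ℝ) / 27) * (A u 0 x t * A v 2 x t * A v 2 x t) + ((70 : ℝ) / 27) * (A u 0 x t * A v 1 x t * A v 3 x t) + ((-80 : ℝ) / 81) * (A u 0 x t * A v 0 x t * A v 4 x t) + ((340 : ℝ) / 81) * (A u 0 x t * A v 0 x t * A v 1 x t * A v 1 x t) + ((-55 : ℝ) / 9) * (A u 0 x t * A v 0 x t * A v 0 x t * A v 2 x t) + ((-55 : ℝ) / 27) * (A u 0 x t * A v 0 x t * A v 0 x t * A v 0 x t * A v 0 x t) + ((10 : ℝ) / 3) * (A u 0 x t * A u 4 x t * A v 0 x t) + ((-230 : ℝ) / 27) * (A u 0 x t * A u 3 x t * A v 1 x t) + ((230 : ℝ) / 27) * (A u 0 x t * A u 2 x t * A v 2 x t) + ((1780 : ℝ) / 81) * (A u 0 x t * A u 2 x t * A v 0 x t * A v 0 x t) + ((-124 : ℝ) / 9) * (A u 0 x t * A u 2 x t * A u 2 x t) + ((-230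 : ℝ) / 27) * (A u 0 x t * A u 1 x t * A v 3 x t) + ((-800 : ℝ) / 27) * (A u 0 x t * A u 1 x t * A v 0 x t * A v 1 x t) + ((248 : ℝ) / 9) * (A u 0 x t * A u 1 x t * A u 3 x t) + ((1520 : ℝ) / 27) * (A u 0 x t * A u 1 x t * A u 1 x t * A v 0 x t) + ((40 : ℝ) / 27) * (A u 0 x t * A u 0 x t * A v 4 x t) + ((-610 : ℝ) / 81) * (A u 0 x t * A u 0 x t * A v 1 x t * A v 1 x t) + ((1720 : ℝ) / 81) * (A u 0 x t * A u 0 x t * A v 0 x t * A v 2 x t) + ((1280 : ℝ) / 81) * (A u 0 x t * A u 0 x t * A v 0 x t * A v 0 x t * A v 0 x t) + ((-44 : ℝ) / 9) * (A u 0 x t * A u 0 x t * A u 4 x t) + ((-1960 : ℝ) / 27) * (A u 0 x t * A u 0 x t * A u 2 x t * A v 0 x t) + ((1280 : ℝ) / 27) * (A u 0 x t * A u 0 x t * A u 1 x t * A v 1 x t) + ((-80 : ℝ)) * (A u 0 x t * A u 0 x t * A u 1 x t * A u 1 x t) + ((-200 : ℝ) / 9) * (A u 0 x t * A u 0 x t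 * A u 0 x t * A v 2 x t) + ((-4720 : ℝ) / 81) * (A u 0 x t * A u 0 x t * A u 0 x t * A v 0 x t * A v 0 x t) + ((640 : ℝ) / 9) * (A u 0 x t * A u 0 x t * A u 0 x t * A u 2 x t) + ((2720 : ℝ) / 27) * (A u 0 x t * A u 0 x t * A u 0 x t * A u 0 x t * A v 0 x t) + ((-64 : ℝ)) * (A u 0 x t * A u 0 x t * A u 0 x t * A u 0 x t * A u 0 x t)

noncomputable def GG' (u v : ℝ → ℝ → ℝ) : ℝ → ℝ → ℝ := fun x t =>
  ((-1 : ℝ) / 18) * (A v 4 x t * A v 3 x t + A v 3 x t * A v 4 x t) + ((1 : ℝ) / 9) * (A v 3 x t * A v 4 x t + A v 2 x t * A v 5 x t) + ((-1 : ℝ) / 9) * (A v 2 x t * A v 5 x t + A v 1 x t * A v 6 x t) + ((-164 : ℝ) / 243) * ((A v 2 x t * A v 1 x t + A v 1 x t * A v 2 x t) * A v 2 x t + A v 1 x t * A v 1 x t * A v 3 x t) + ((98 : ℝ) / 243) * ((A v 1 x t * A v 2 x t + A v 0 x t * A v 3 x t) * A v 2 x t + A v 0 x t * A v 2 x t * A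 v 3 x t) + ((-196 : ℝ) / 243) * ((A v 1 x t * A v 1 x t + A v 0 x t * A v 2 x t) * A v 3 x t + A v 0 x t * A v 1 x t * A v 4 x t) + ((11 : ℝ) / 81) * ((A v 1 x t * A v 0 x t + A v 0 x t * A v 1 x t) * A v 4 x t + A v 0 x t * A v 0 x t * A v 5 x t) + ((-140 : ℝ) / 243) * (((A v 1 x t * A v 0 x t + A v 0 x t * A v 1 x t) * A v 1 x t + A v 0 x t * A v 0 x t * A v 2 x t) * A v 1 x t + A v 0 x t * A v 0 x t * A v 1 x t * A v 2 x t) + ((265 : ℝ) / 486) * (((A v 1 x t * A v 0 x t + A v 0 x t * A v 1 x t) * A v 0 x t + A v 0 x t * A v 0 x t * A v 1 x t) * A v 2 x t + A v 0 x t * A v 0 x t * A v 0 x t * A v 3 x t) + ((49 : ℝ) / 486) * ((((A v 1 x t * A v 0 x t + A v 0 x t * A v 1 x t) * A v 0 x t + A v 0 x t * A v 0 x t * A v 1 x t) * A v 0 x t + A v 0 x t * A v 0 x t * A v 0 x t * A v 1 x t) * A v 0 x t + A v 0 x t * A v 0 x t * A v 0 x t * A v 0 x t * A v 1 x t) + ((10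 : ℝ) / 27) * (A u 6 x t * A v 1 x t + A u 5 x t * A v 2 x t) + ((-10 : ℝ) / 27) * (A u 5 x t * A v 2 x t + A u 4 x t * A v 3 x t) + ((-25 : ℝ) / 54) * ((A u 5 x t * A v 0 x t + A u 4 x t * A v 1 x t) * A v 0 x t + A u 4 x t * A v 0 x t * A v 1 x t) + ((10 : ℝ) / 27) * (A u 4 x t * A v 3 x t + A u 3 x t * A v 4 x t) + ((235 : ℝ) / 81) * ((A u 4 x t * A v 0 x t + A u 3 x t * A v 1 x t) * A v 1 x t + A u 3 x t * A v 0 x t * A v 2 x t) + ((-11 : ℝ) / 18) * (A u 4 x t * A u 3 x t + A u 3 x t * A u 4 x t) + ((-10 : ℝ) / 27) * (A u 3 x t * A v 4 x t + A u 2 x t * A v 5 x t) + ((205 : ℝ) / 81) * ((A u 3 x t * A v 1 x t + A u 2 x t * A v 2 x t) * A v 1 x t + A u 2 x t * A v 1 x t * A v 2 x t) + ((-235 : ℝ) / 81) * ((A u 3 x t * A v 0 x t + A u 2 x t * A v 1 x t) * A v 2 x t + A u 2 x t * A v 0 x t * A v 3 x t) + ((-55 : ℝ) / 27) * (((A u 3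 x t * A v 0 x t + A u 2 x t * A v 1 x t) * A v 0 x t + A u 2 x t * A v 0 x t * A v 1 x t) * A v 0 x t + A u 2 x t * A v 0 x t * A v 0 x t * A v 1 x t) + ((11 : ℝ) / 9) * (A u 3 x t * A u 4 x t + A u 2 x t * A u 5 x t) + ((140 : ℝ) / 27) * ((A u 3 x t * A u 2 x t + A u 2 x t * A u 3 x t) * A v 0 x t + A u 2 x t * A u 2 x t * A v 1 x t) + ((10 : ℝ) / 27) * (A u 2 x t * A v 5 x t + A u 1 x t * A v 6 x t) + ((370 : ℝ) / 81) * ((A u 2 x t * A v 1 x t + A u 1 x t * A v 2 x t) * A v 2 x t + A u 1 x t * A v 1 x t * A v 3 x t) + ((235 : ℝ) / 81) * ((A u 2 x t * A v 0 x t + A u 1 x t * A v 1 x t) * A v 3 x t + A u 1 x t * A v 0 x t * A v 4 x t) + ((40 : ℝ) / 9) * (((A u 2 x t * A v 0 x t + A u 1 x t * A v 1 x t) * A v 0 x t + A u 1 x t * A v 0 x t * A v 1 x t) * A v 1 x t + A u 1 x t * A v 0 x t * A v 0 x t * A v 2 x t) + ((-11 : ℝ) / 9) * (A u 2 x t * A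 u 5 x t + A u 1 x t * A u 6 x t) + ((-280 : ℝ) / 27) * ((A u 2 x t * A u 3 x t + A u 1 x t * A u 4 x t) * A v 0 x t + A u 1 x t * A u 3 x t * A v 1 x t) + ((-410 : ℝ) / 27) * ((A u 2 x t * A u 2 x t + A u 1 x t * A u 3 x t) * A v 1 x t + A u 1 x t * A u 2 x t * A v 2 x t) + ((-220 : ℝ) / 27) * ((A u 2 x t * A u 1 x t + A u 1 x t * A u 2 x t) * A v 2 x t + A u 1 x t * A u 1 x t * A v 3 x t) + ((-740 : ℝ) / 81) * (((A u 2 x t * A u 1 x t + A u 1 x t * A u 2 x t) * A v 0 x t + A u 1 x t * A u 1 x t * A v 1 x t) * A v 0 x t + A u 1 x t * A u 1 x t * A v 0 x t * A v 1 x t) + ((212 : ℝ) / 9) * ((A u 2 x t * A u 1 x t + A u 1 x t * A u 2 x t) * A u 2 x t + A u 1 x t * A u 1 x t * A u 3 x t) + ((-35 : ℝ) / 27) * ((A u 1 x t * A v 2 x t + A u 0 x t * A v 3 x t) * A v 2 x t + A u 0 x t * A v 2 x t * A v 3 x t) + ((70 : ℝ) / 27) * ((A u 1 x t * A v 1 x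 t + A u 0 x t * A v 2 x t) * A v 3 x t + A u 0 x t * A v 1 x t * A v 4 x t) + ((-80 : ℝ) / 81) * ((A u 1 x t * A v 0 x t + A u 0 x t * A v 1 x t) * A v 4 x t + A u 0 x t * A v 0 x t * A v 5 x t) + ((340 : ℝ) / 81) * (((A u 1 x t * A v 0 x t + A u 0 x t * A v 1 x t) * A v 1 x t + A u 0 x t * A v 0 x t * A v 2 x t) * A v 1 x t + A u 0 x t * A v 0 x t * A v 1 x t * A v 2 x t) + ((-55 : ℝ) / 9) * (((A u 1 x t * A v 0 x t + A u 0 x t * A v 1 x t) * A v 0 x t + A u 0 x t * A v 0 x t * A v 1 x t) * A v 2 x t + A u 0 x t * A v 0 x t * A v 0 x t * A v 3 x t) + ((-55 : ℝ) / 27) * ((((A u 1 x t * A v 0 x t + A u 0 x t * A v 1 x t) * A v 0 x t + A u 0 x t * A v 0 x t * A v 1 x t) * A v 0 x t + A u 0 x t * A v 0 x t * A v 0 x t * A v 1 x t) * A v 0 x t + A u 0 x t * A v 0 x t * A v 0 x t * A v 0 x t * A v 1 x t) + ((10 : ℝ) / 3) * ((A u 1 x t * A u 4 x t + A u 0 x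 t * A u 5 x t) * A v 0 x t + A u 0 x t * A u 4 x t * A v 1 x t) + ((-230 : ℝ) / 27) * ((A u 1 x t * A u 3 x t + A u 0 x t * A u 4 x t) * A v 1 x t + A u 0 x t * A u 3 x t * A v 2 x t) + ((230 : ℝ) / 27) * ((A u 1 x t * A u 2 x t + A u 0 x t * A u 3 x t) * A v 2 x t + A u 0 x t * A u 2 x t * A v 3 x t) + ((1780 : ℝ) / 81) * (((A u 1 x t * A u 2 x t + A u 0 x t * A u 3 x t) * A v 0 x t + A u 0 x t * A u 2 x t * A v 1 x t) * A v 0 x t + A u 0 x t * A u 2 x t * A v 0 x t * A v 1 x t) + ((-124 : ℝ) / 9) * ((A u 1 x t * A u 2 x t + A u 0 x t * A u 3 x t) * A u 2 x t + A u 0 x t * A u 2 x t * A u 3 x t) + ((-230 : ℝ) / 27) * ((A u 1 x t * A u 1 x t + A u 0 x t * A u 2 x t) * A v 3 x t + A u 0 x t * A u 1 x t * A v 4 x t) + ((-800 : ℝ) / 27) * (((A u 1 x t * A u 1 x t + A u 0 x t * A u 2 x t) * A v 0 x t + A u 0 x t * A u 1 x t * A v 1 x t) * A v 1 x t + A u 0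 x t * A u 1 x t * A v 0 x t * A v 2 x t) + ((248 : ℝ) / 9) * ((A u 1 x t * A u 1 x t + A u 0 x t * A u 2 x t) * A u 3 x t + A u 0 x t * A u 1 x t * A u 4 x t) + ((1520 : ℝ) / 27) * (((A u 1 x t * A u 1 x t + A u 0 x t * A u 2 x t) * A u 1 x t + A u 0 x t * A u 1 x t * A u 2 x t) * A v 0 x t + A u 0 x t * A u 1 x t * A u 1 x t * A v 1 x t) + ((40 : ℝ) / 27) * ((A u 1 x t * A u 0 x t + A u 0 x t * A u 1 x t) * A v 4 x t + A u 0 x t * A u 0 x t * A v 5 x t) + ((-610 : ℝ) / 81) * (((A u 1 x t * A u 0 x t + A u 0 x t * A u 1 x t) * A v 1 x t + A u 0 x t * A u 0 x t * A v 2 x t) * A v 1 x t + A u 0 x t * A u 0 x t * A v 1 x t * A v 2 x t) + ((1720 : ℝ) / 81) * (((A u 1 x t * A u 0 x t + A u 0 x t * A u 1 x t) * A v 0 x t + A u 0 x t * A u 0 x t * A v 1 x t) * A v 2 x t + A u 0 x t * A u 0 x t * A v 0 x t * A v 3 x t) + ((1280 : ℝ) / 81) * ((((A u 1 x t * A u 0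 x t + A u 0 x t * A u 1 x t) * A v 0 x t + A u 0 x t * A u 0 x t * A v 1 x t) * A v 0 x t + A u 0 x t * A u 0 x t * A v 0 x t * A v 1 x t) * A v 0 x t + A u 0 x t * A u 0 x t * A v 0 x t * A v 0 x t * A v 1 x t) + ((-44 : ℝ) / 9) * ((A u 1 x t * A u 0 x t + A u 0 x t * A u 1 x t) * A u 4 x t + A u 0 x t * A u 0 x t * A u 5 x t) + ((-1960 : ℝ) / 27) * (((A u 1 x t * A u 0 x t + A u 0 x t * A u 1 x t) * A u 2 x t + A u 0 x t * A u 0 x t * A u 3 x t) * A v 0 x t + A u 0 x t * A u 0 x t * A u 2 x t * A v 1 x t) + ((1280 : ℝ) / 27) * (((A u 1 x t * A u 0 x t + A u 0 x t * A u 1 x t) * A u 1 x t + A u 0 x t * A u 0 x t * A u 2 x t) * A v 1 x t + A u 0 x t * A u 0 x t * A u 1 x t * A v 2 x t) + ((-80 : ℝ)) * (((A u 1 x t * A u 0 x t + A u 0 x t * A u 1 x t) * A u 1 x t + A u 0 x t * A u 0 x t * A u 2 x t) * A u 1 x t + A u 0 x t * A u 0 x t * A u 1 x t * A u 2 x t)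 + ((-200 : ℝ) / 9) * (((A u 1 x t * A u 0 x t + A u 0 x t * A u 1 x t) * A u 0 x t + A u 0 x t * A u 0 x t * A u 1 x t) * A v 2 x t + A u 0 x t * A u 0 x t * A u 0 x t * A v 3 x t) + ((-4720 : ℝ) / 81) * ((((A u 1 x t * A u 0 x t + A u 0 x t * A u 1 x t) * A u 0 x t + A u 0 x t * A u 0 x t * A u 1 x t) * A v 0 x t + A u 0 x t * A u 0 x t * A u 0 x t * A v 1 x t) * A v 0 x t + A u 0 x t * A u 0 x t * A u 0 x t * A v 0 x t * A v 1 x t) + ((640 : ℝ) / 9) * (((A u 1 x t * A u 0 x t + A u 0 x t * A u 1 x t) * A u 0 x t + A u 0 x t * A u 0 x t * A u 1 x t) * A u 2 x t + A u 0 x t * A u 0 x t * A u 0 x t * A u 3 x t) + ((2720 : ℝ) / 27) * ((((A u 1 x t * A u 0 x t + A u 0 x t * A u 1 x t) * A u 0 x t + A u 0 x t * A u 0 x t * A u 1 x t) * A u 0 x t + A u 0 x t * A u 0 x t * A u 0 x t * A u 1 x t) * A v 0 x t + A u 0 x t * A u 0 x t * A u 0 x t * A u 0 x t * A v 1 x t)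 + ((-64 : ℝ)) * ((((A u 1 x t * A u 0 x t + A u 0 x t * A u 1 x t) * A u 0 x t + A u 0 x t * A u 0 x t * A u 1 x t) * A u 0 x t + A u 0 x t * A u 0 x t * A u 0 x t * A u 1 x t) * A u 0 x t + A u 0 x t * A u 0 x t * A u 0 x t * A u 0 x t * A u 1 x t)

noncomputable def HT (u v : ℝ → ℝ → ℝ) : ℝ → ℝ → ℝ := fun x t =>
  ((-2 : ℝ) / 27) * (QV' u v x t * A v 1 x t + A v 1 x t * QV' u v x t) + ((7 : ℝ) / 162) * ((QV u v x t * A v 0 x t + A v 0 x t * QV u v x t) * A v 0 x t + A v 0 x t * A v 0 x t * QV u v x t) + ((5 : ℝ) / 9) * (QU' u v x t * A v 1 x t + A u 1 x t * QV' u v x t) + ((-1 : ℝ)) * (QU' u v x t * A u 1 x t + A u 1 x t * QU' u v x t) + ((-5 : ℝ) / 9) * ((QU u v x t * A v 0 x t + A u 0 x t * QV u v x t) * A v 0 x t + A u 0 x t * A v 0 x t * QV u v x t) + ((20 : ℝ) / 9) * ((QU u v x t * A u 0 x t + A u 0 x t * QU u v x t) * A v 0 x t + A u 0 x t * A u 0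 x t * QV u v x t) + ((-8 : ℝ) / 3) * ((QU u v x t * A u 0 x t + A u 0 x t * QU u v x t) * A u 0 x t + A u 0 x t * A u 0 x t * QU u v x t)

theorem hasDerivAt_QU_x (u v : ℝ → ℝ → ℝ) (hu : ContDiff ℝ (⊤ : ℕ∞) (Function.uncurry u))
    (hv : ContDiff ℝ (⊤ : ℕ∞) (Function.uncurry v)) (x t : ℝ) :
    HasDerivAt (fun y => QU u v y t) (QU' u v x t) x := by
  have xu0 := hasDerivAt_A_x hu 0 x t
  have xu1 := hasDerivAt_A_x hu 1 x t
  have xu2 := hasDerivAt_A_x hu 2 x t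
  have xu3 := hasDerivAt_A_x hu 3 x t
  have xu5 := hasDerivAt_A_x hu 5 x t
  have xv0 := hasDerivAt_A_x hv 0 x t
  have xv1 := hasDerivAt_A_x hv 1 x t
  have xv2 := hasDerivAt_A_x hv 2 x t
  have xv3 := hasDerivAt_A_x hv 3 x t
  have xv5 := hasDerivAt_A_x hv 5 x t
  exact (((((((((((((((HasDerivAt.const_mul ((-5 : ℝ) / 9) xv5).add (HasDerivAt.const_mul ((-10 : ℝ) / 3) (xv1.mul xv2))).add (HasDerivAt.const_mul ((-10 : ℝ) / 9) (xv0.mul xv3))).add (HasDerivAt.const_mul ((2 : ℝ)) xu5)).add (HasDerivAt.const_mul ((40 : ℝ) / 9) (xu3.mul xv0))).add (HasDerivAt.const_mul ((40 : ℝ) / 3) (xu2.mul xv1))).add (HasDerivAt.const_mul ((125 : ℝ) / 9) (xu1.mul xv2))).add (HasDerivAt.const_mul ((5 : ℝ) / 9) ((xu1.mul xv0).mul xv0))).add (HasDerivAt.const_mul ((-50 : ℝ)) (xu1.mul xu2))).add (HasDerivAt.const_mul ((50 : ℝ) / 9) (xu0.mul xv3))).add (HasDerivAt.const_mul ((20 :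 ℝ) / 9) ((xu0.mul xv0).mul xv1))).add (HasDerivAt.const_mul ((-20 : ℝ)) (xu0.mul xu3))).add (HasDerivAt.const_mul ((-40 : ℝ) / 3) ((xu0.mul xu1).mul xv0))).add (HasDerivAt.const_mul ((-80 : ℝ) / 9) ((xu0.mul xu0).mul xv1))).add (HasDerivAt.const_mul ((40 : ℝ)) ((xu0.mul xu0).mul xu1)))

theorem hasDerivAt_QV_x (u v : ℝ → ℝ → ℝ) (hu : ContDiff ℝ (⊤ : ℕ∞) (Function.uncurry u))
    (hv : ContDiff ℝ (⊤ : ℕ∞) (Function.uncurry v)) (x t : ℝ) :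
    HasDerivAt (fun y => QV u v y t) (QV' u v x t) x := by
  have xu0 := hasDerivAt_A_x hu 0 x t
  have xu1 := hasDerivAt_A_x hu 1 x t
  have xu2 := hasDerivAt_A_x hu 2 x t
  have xu3 := hasDerivAt_A_x hu 3 x t
  have xu5 := hasDerivAt_A_x hu 5 x t
  have xv0 := hasDerivAt_A_x hv 0 x t
  have xv1 := hasDerivAt_A_x hv 1 x t
  have xv2 := hasDerivAt_A_x hv 2 x t
  have xv3 := hasDerivAt_A_x hv 3 x t
  have xv5 := hasDerivAt_A_x hv 5 x t
  exact (((((((((((((((HasDerivAt.const_mul ((-4 : ℝ) / 3) xv5).add (HasDerivAt.const_mul ((-55 : ℝ) / 9) (xv1.mul xv2))).add (HasDerivAt.const_mul ((-5 : ℝ) / 9) (xv0.mul xv3))).add (HasDerivAt.const_mul ((35 : ℝ) / 9) ((xv0.mul xv0).mul xv1))).add (HasDerivAt.const_mul ((5 : ℝ)) xu5)).add (HasDerivAt.const_mul ((10 : ℝ) / 3) (xu3.mul xv0))).add (HasDerivAt.const_mul ((80 : ℝ) / 3) (xu2.mul xv1))).add (HasDerivAt.const_mul ((30 : ℝ)) (xu1.mul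 xv2))).add (HasDerivAt.const_mul ((-40 : ℝ) / 3) ((xu1.mul xv0).mul xv0))).add (HasDerivAt.const_mul ((-120 : ℝ)) (xu1.mul xu2))).add (HasDerivAt.const_mul ((10 : ℝ)) (xu0.mul xv3))).add (HasDerivAt.const_mul ((-20 : ℝ)) ((xu0.mul xv0).mul xv1))).add (HasDerivAt.const_mul ((-40 : ℝ)) (xu0.mul xu3))).add (HasDerivAt.const_mul ((160 : ℝ) / 3) ((xu0.mul xu1).mul xv0))).add (HasDerivAt.const_mul ((40 : ℝ) / 3) ((xu0.mul xu0).mul xv1)))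

theorem hasDerivAt_GG_x (u v : ℝ → ℝ → ℝ) (hu : ContDiff ℝ (⊤ : ℕ∞) (Function.uncurry u))
    (hv : ContDiff ℝ (⊤ : ℕ∞) (Function.uncurry v)) (x t : ℝ) :
    HasDerivAt (fun y => GG u v y t) (GG' u v x t) x := by
  have xu0 := hasDerivAt_A_x hu 0 x t
  have xu1 := hasDerivAt_A_x hu 1 x t
  have xu2 := hasDerivAt_A_x hu 2 x t
  have xu3 := hasDerivAt_A_x hu 3 x t
  have xu4 := hasDerivAt_A_x hu 4 x t
  have xu5 := hasDerivAt_A_x hu 5 x t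
  have xv0 := hasDerivAt_A_x hv 0 x t
  have xv1 := hasDerivAt_A_x hv 1 x t
  have xv2 := hasDerivAt_A_x hv 2 x t
  have xv3 := hasDerivAt_A_x hv 3 x t
  have xv4 := hasDerivAt_A_x hv 4 x t
  have xv5 := hasDerivAt_A_x hv 5 x t
  exact ((((((((((((((((((((((((((((((((((((((((((((((((((((((((((((HasDerivAt.const_mul ((-1 : ℝ) / 18) (xv3.mul xv3)).add (HasDerivAt.const_mul ((1 : ℝ) / 9) (xv2.mul xv4))).add (HasDerivAt.const_mul ((-1 : ℝ) / 9) (xv1.mul xv5))).add (HasDerivAt.const_mul ((-164 : ℝ) / 243) ((xv1.mul xv1).mul xv2))).add (HasDerivAt.const_mul ((98 : ℝ) / 243) ((xv0.mul xv2).mul xv2))).add (HasDerivAt.const_mul ((-196 : ℝ) / 243) ((xv0.mul xv1).mul xv3))).add (HasDerivAt.const_mul ((11 : ℝ) / 81) ((xv0.mul xv0).mul xv4))).add (HasDerivAt.const_mul ((-140 : ℝ) / 243) (((xv0.mul xv0).mul xv1).mul xv1))).add (HasDerivAt.const_mul ((265 : ℝ) / 486) (((xv0.mul xv0).mul xv0).mul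 xv2))).add (HasDerivAt.const_mul ((49 : ℝ) / 486) ((((xv0.mul xv0).mul xv0).mul xv0).mul xv0))).add (HasDerivAt.const_mul ((10 : ℝ) / 27) (xu5.mul xv1))).add (HasDerivAt.const_mul ((-10 : ℝ) / 27) (xu4.mul xv2))).add (HasDerivAt.const_mul ((-25 : ℝ) / 54) ((xu4.mul xv0).mul xv0))).add (HasDerivAt.const_mul ((10 : ℝ) / 27) (xu3.mul xv3))).add (HasDerivAt.const_mul ((235 : ℝ) / 81) ((xu3.mul xv0).mul xv1))).add (HasDerivAt.const_mul ((-11 : ℝ) / 18) (xu3.mul xu3))).add (HasDerivAt.const_mul ((-10 : ℝ) / 27) (xu2.mul xv4))).add (HasDerivAt.const_mul ((205 : ℝ) / 81) ((xu2.mul xv1).mul xv1))).add (HasDerivAt.const_mul ((-235 : ℝ) / 81) ((xu2.mul xv0).mul xv2))).add (HasDerivAt.const_mul ((-55 : ℝ) / 27) (((xu2.mul xv0).mul xv0).mul xv0))).add (HasDerivAt.const_mul ((11 : ℝ) / 9) (xu2.mul xu4))).add (HasDerivAt.const_mul ((140 : ℝ) / 27) ((xu2.mul xu2).mul xv0))).add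 (HasDerivAt.const_mul ((10 : ℝ) / 27) (xu1.mul xv5))).add (HasDerivAt.const_mul ((370 : ℝ) / 81) ((xu1.mul xv1).mul xv2))).add (HasDerivAt.const_mul ((235 : ℝ) / 81) ((xu1.mul xv0).mul xv3))).add (HasDerivAt.const_mul ((40 : ℝ) / 9) (((xu1.mul xv0).mul xv0).mul xv1))).add (HasDerivAt.const_mul ((-11 : ℝ) / 9) (xu1.mul xu5))).add (HasDerivAt.const_mul ((-280 : ℝ) / 27) ((xu1.mul xu3).mul xv0))).add (HasDerivAt.const_mul ((-410 : ℝ) / 27) ((xu1.mul xu2).mul xv1))).add (HasDerivAt.const_mul ((-220 : ℝ) / 27) ((xu1.mul xu1).mul xv2))).add (HasDerivAt.const_mul ((-740 : ℝ) / 81) (((xu1.mul xu1).mul xv0).mul xv0))).add (HasDerivAt.const_mul ((212 : ℝ) / 9) ((xu1.mul xu1).mul xu2))).add (HasDerivAt.const_mul ((-35 : ℝ) / 27) ((xu0.mul xv2).mul xv2))).add (HasDerivAt.const_mul ((70 : ℝ) / 27) ((xu0.mul xv1).mul xv3))).add (HasDerivAt.const_mul ((-80 : ℝ) / 81) ((xu0.mul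 xv0).mul xv4))).add (HasDerivAt.const_mul ((340 : ℝ) / 81) (((xu0.mul xv0).mul xv1).mul xv1))).add (HasDerivAt.const_mul ((-55 : ℝ) / 9) (((xu0.mul xv0).mul xv0).mul xv2))).add (HasDerivAt.const_mul ((-55 : ℝ) / 27) ((((xu0.mul xv0).mul xv0).mul xv0).mul xv0))).add (HasDerivAt.const_mul ((10 : ℝ) / 3) ((xu0.mul xu4).mul xv0))).add (HasDerivAt.const_mul ((-230 : ℝ) / 27) ((xu0.mul xu3).mul xv1))).add (HasDerivAt.const_mul ((230 : ℝ) / 27) ((xu0.mul xu2).mul xv2))).add (HasDerivAt.const_mul ((1780 : ℝ) / 81) (((xu0.mul xu2).mul xv0).mul xv0))).add (HasDerivAt.const_mul ((-124 : ℝ) / 9) ((xu0.mul xu2).mul xu2))).add (HasDerivAt.const_mul ((-230 : ℝ) / 27) ((xu0.mul xu1).mul xv3))).add (HasDerivAt.const_mul ((-800 : ℝ) / 27) (((xu0.mul xu1).mul xv0).mul xv1))).add (HasDerivAt.const_mul ((248 : ℝ) / 9) ((xu0.mul xu1).mul xu3))).add (HasDerivAt.const_mul ((1520 : ℝ) / 27)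 (((xu0.mul xu1).mul xu1).mul xv0))).add (HasDerivAt.const_mul ((40 : ℝ) / 27) ((xu0.mul xu0).mul xv4))).add (HasDerivAt.const_mul ((-610 : ℝ) / 81) (((xu0.mul xu0).mul xv1).mul xv1))).add (HasDerivAt.const_mul ((1720 : ℝ) / 81) (((xu0.mul xu0).mul xv0).mul xv2))).add (HasDerivAt.const_mul ((1280 : ℝ) / 81) ((((xu0.mul xu0).mul xv0).mul xv0).mul xv0))).add (HasDerivAt.const_mul ((-44 : ℝ) / 9) ((xu0.mul xu0).mul xu4))).add (HasDerivAt.const_mul ((-1960 : ℝ) / 27) (((xu0.mul xu0).mul xu2).mul xv0))).add (HasDerivAt.const_mul ((1280 : ℝ) / 27) (((xu0.mul xu0).mul xu1).mul xv1))).add (HasDerivAt.const_mul ((-80 : ℝ)) (((xu0.mul xu0).mul xu1).mul xu1))).add (HasDerivAt.const_mul ((-200 : ℝ) / 9) (((xu0.mul xu0).mul xu0).mul xv2))).add (HasDerivAt.const_mul ((-4720 : ℝ) / 81) ((((xu0.mul xu0).mul xu0).mul xv0).mul xv0))).add (HasDerivAt.const_mul ((640 : ℝ) / 9) (((xu0.mul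 xu0).mul xu0).mul xu2))).add (HasDerivAt.const_mul ((2720 : ℝ) / 27) ((((xu0.mul xu0).mul xu0).mul xu0).mul xv0))).add (HasDerivAt.const_mul ((-64 : ℝ)) ((((xu0.mul xu0).mul xu0).mul xu0).mul xu0)))

theorem contDiff_QU (u v : ℝ → ℝ → ℝ) (hu : ContDiff ℝ (⊤ : ℕ∞) (Function.uncurry u))
    (hv : ContDiff ℝ (⊤ : ℕ∞) (Function.uncurry v)) :
    ContDiff ℝ (⊤ : ℕ∞) (fun p : ℝ × ℝ => QU u v p.1 p.2) := by
  have cu0 : ContDiff ℝ (⊤ : ℕ∞) (fun p : ℝ × ℝ => A u 0 p.1 p.2) := contDiff_A hu 0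
  have cu1 : ContDiff ℝ (⊤ : ℕ∞) (fun p : ℝ × ℝ => A u 1 p.1 p.2) := contDiff_A hu 1
  have cu2 : ContDiff ℝ (⊤ : ℕ∞) (fun p : ℝ × ℝ => A u 2 p.1 p.2) := contDiff_A hu 2
  have cu3 : ContDiff ℝ (⊤ : ℕ∞) (fun p : ℝ × ℝ => A u 3 p.1 p.2) := contDiff_A hu 3
  have cu5 : ContDiff ℝ (⊤ : ℕ∞) (fun p : ℝ × ℝ => A u 5 p.1 p.2) := contDiff_A hu 5
  have cv0 : ContDiff ℝ (⊤ : ℕ∞) (fun p : ℝ × ℝ => A v 0 p.1 p.2) := contDiff_A hv 0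
  have cv1 : ContDiff ℝ (⊤ : ℕ∞) (fun p : ℝ × ℝ => A v 1 p.1 p.2) := contDiff_A hv 1
  have cv2 : ContDiff ℝ (⊤ : ℕ∞) (fun p : ℝ × ℝ => A v 2 p.1 p.2) := contDiff_A hv 2
  have cv3 : ContDiff ℝ (⊤ : ℕ∞) (fun p : ℝ × ℝ => A v 3 p.1 p.2) := contDiff_A hv 3
  have cv5 : ContDiff ℝ (⊤ : ℕ∞) (fun p : ℝ × ℝ => A v 5 p.1 p.2) := contDiff_A hv 5
  exact (((((((((((((((contDiff_const.mul cv5).add (contDiff_const.mul (cv1.mul cv2))).add (contDiff_const.mul (cv0.mul cv3))).add (contDiff_const.mul cu5)).add (contDiff_const.mul (cu3.mul cv0))).add (contDiff_const.mul (cu2.mul cv1))).add (contDiff_const.mul (cu1.mul cv2))).add (contDiff_const.mul ((cu1.mul cv0).mul cv0))).add (contDiff_const.mul (cu1.mul cu2))).add (contDiff_const.mul (cu0.mul cv3))).add (contDiff_const.mul ((cu0.mul cv0).mul cv1))).add (contDiff_const.mul (cu0.mul cu3))).add (contDiff_const.mul ((cu0.mul cu1).mul cv0))).add (contDiff_const.mul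 ((cu0.mul cu0).mul cv1))).add (contDiff_const.mul ((cu0.mul cu0).mul cu1)))

theorem contDiff_QV (u v : ℝ → ℝ → ℝ) (hu : ContDiff ℝ (⊤ : ℕ∞) (Function.uncurry u))
    (hv : ContDiff ℝ (⊤ : ℕ∞) (Function.uncurry v)) :
    ContDiff ℝ (⊤ : ℕ∞) (fun p : ℝ × ℝ => QV u v p.1 p.2) := by
  have cu0 : ContDiff ℝ (⊤ : ℕ∞) (fun p : ℝ × ℝ => A u 0 p.1 p.2) := contDiff_A hu 0
  have cu1 : ContDiff ℝ (⊤ : ℕ∞) (fun p : ℝ × ℝ => A u 1 p.1 p.2) := contDiff_A hu 1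
  have cu2 : ContDiff ℝ (⊤ : ℕ∞) (fun p : ℝ × ℝ => A u 2 p.1 p.2) := contDiff_A hu 2
  have cu3 : ContDiff ℝ (⊤ : ℕ∞) (fun p : ℝ × ℝ => A u 3 p.1 p.2) := contDiff_A hu 3
  have cu5 : ContDiff ℝ (⊤ : ℕ∞) (fun p : ℝ × ℝ => A u 5 p.1 p.2) := contDiff_A hu 5
  have cv0 : ContDiff ℝ (⊤ : ℕ∞) (fun p : ℝ × ℝ => A v 0 p.1 p.2) := contDiff_A hv 0
  have cv1 : ContDiff ℝ (⊤ : ℕ∞) (fun p : ℝ × ℝ => A v 1 p.1 p.2) := contDiff_A hv 1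
  have cv2 : ContDiff ℝ (⊤ : ℕ∞) (fun p : ℝ × ℝ => A v 2 p.1 p.2) := contDiff_A hv 2
  have cv3 : ContDiff ℝ (⊤ : ℕ∞) (fun p : ℝ × ℝ => A v 3 p.1 p.2) := contDiff_A hv 3
  have cv5 : ContDiff ℝ (⊤ : ℕ∞) (fun p : ℝ × ℝ => A v 5 p.1 p.2) := contDiff_A hv 5
  exact (((((((((((((((contDiff_const.mul cv5).add (contDiff_const.mul (cv1.mul cv2))).add (contDiff_const.mul (cv0.mul cv3))).add (contDiff_const.mul ((cv0.mul cv0).mul cv1))).add (contDiff_const.mul cu5)).add (contDiff_const.mul (cu3.mul cv0))).add (contDiff_const.mul (cu2.mul cv1))).add (contDiff_const.mul (cu1.mul cv2))).add (contDiff_const.mul ((cu1.mul cv0).mul cv0))).add (contDiff_const.mul (cu1.mul cu2))).add (contDiff_const.mul (cu0.mul cv3))).add (contDiff_const.mul ((cu0.mul cv0).mul cv1))).add (contDiff_const.mul (cu0.mul cu3))).add (contDiff_const.mul ((cu0.mul cu1).mul cv0))).add (contDiff_const.mul ((cu0.mul cu0).mul cv1)))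

theorem contDiff_QUp (u v : ℝ → ℝ → ℝ) (hu : ContDiff ℝ (⊤ : ℕ∞) (Function.uncurry u))
    (hv : ContDiff ℝ (⊤ : ℕ∞) (Function.uncurry v)) :
    ContDiff ℝ (⊤ : ℕ∞) (fun p : ℝ × ℝ => QU' u v p.1 p.2) := by
  have cu0 : ContDiff ℝ (⊤ : ℕ∞) (fun p : ℝ × ℝ => A u 0 p.1 p.2) := contDiff_A hu 0
  have cu1 : ContDiff ℝ (⊤ : ℕ∞) (fun p : ℝ × ℝ => A u 1 p.1 p.2) := contDiff_A hu 1
  have cu2 : ContDiff ℝ (⊤ : ℕ∞) (fun p : ℝ × ℝ => A u 2 p.1 p.2) := contDiff_A hu 2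
  have cu3 : ContDiff ℝ (⊤ : ℕ∞) (fun p : ℝ × ℝ => A u 3 p.1 p.2) := contDiff_A hu 3
  have cu4 : ContDiff ℝ (⊤ : ℕ∞) (fun p : ℝ × ℝ => A u 4 p.1 p.2) := contDiff_A hu 4
  have cu6 : ContDiff ℝ (⊤ : ℕ∞) (fun p : ℝ × ℝ => A u 6 p.1 p.2) := contDiff_A hu 6
  have cv0 : ContDiff ℝ (⊤ : ℕ∞) (fun p : ℝ × ℝ => A v 0 p.1 p.2) := contDiff_A hv 0
  have cv1 : ContDiff ℝ (⊤ : ℕ∞) (fun p : ℝ × ℝ => A v 1 p.1 p.2) := contDiff_A hv 1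
  have cv2 : ContDiff ℝ (⊤ : ℕ∞) (fun p : ℝ × ℝ => A v 2 p.1 p.2) := contDiff_A hv 2
  have cv3 : ContDiff ℝ (⊤ : ℕ∞) (fun p : ℝ × ℝ => A v 3 p.1 p.2) := contDiff_A hv 3
  have cv4 : ContDiff ℝ (⊤ : ℕ∞) (fun p : ℝ × ℝ => A v 4 p.1 p.2) := contDiff_A hv 4
  have cv6 : ContDiff ℝ (⊤ : ℕ∞) (fun p : ℝ × ℝ => A v 6 p.1 p.2) := contDiff_A hv 6
  exact (((((((((((((((contDiff_const.mul cv6).add (contDiff_const.mul ((cv2.mul cv2).add (cv1.mul cv3)))).add (contDiff_const.mul ((cv1.mul cv3).add (cv0.mul cv4)))).add (contDiff_const.mul cu6)).add (contDiff_const.mul ((cu4.mul cv0).add (cu3.mul cv1)))).add (contDiff_const.mul ((cu3.mul cv1).add (cu2.mul cv2)))).add (contDiff_const.mul ((cu2.mul cv2).add (cu1.mul cv3)))).add (contDiff_const.mul ((((cu2.mul cv0).add (cu1.mul cv1)).mul cv0).add ((cu1.mul cv0).mul cv1)))).add (contDiff_const.mul ((cu2.mul cu2).add (cu1.mul cu3)))).add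 (contDiff_const.mul ((cu1.mul cv3).add (cu0.mul cv4)))).add (contDiff_const.mul ((((cu1.mul cv0).add (cu0.mul cv1)).mul cv1).add ((cu0.mul cv0).mul cv2)))).add (contDiff_const.mul ((cu1.mul cu3).add (cu0.mul cu4)))).add (contDiff_const.mul ((((cu1.mul cu1).add (cu0.mul cu2)).mul cv0).add ((cu0.mul cu1).mul cv1)))).add (contDiff_const.mul ((((cu1.mul cu0).add (cu0.mul cu1)).mul cv1).add ((cu0.mul cu0).mul cv2)))).add (contDiff_const.mul ((((cu1.mul cu0).add (cu0.mul cu1)).mul cu1).add ((cu0.mul cu0).mul cu2))))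

theorem contDiff_QVp (u v : ℝ → ℝ → ℝ) (hu : ContDiff ℝ (⊤ : ℕ∞) (Function.uncurry u))
    (hv : ContDiff ℝ (⊤ : ℕ∞) (Function.uncurry v)) :
    ContDiff ℝ (⊤ : ℕ∞) (fun p : ℝ × ℝ => QV' u v p.1 p.2) := by
  have cu0 : ContDiff ℝ (⊤ : ℕ∞) (fun p : ℝ × ℝ => A u 0 p.1 p.2) := contDiff_A hu 0
  have cu1 : ContDiff ℝ (⊤ : ℕ∞) (fun p : ℝ × ℝ => A u 1 p.1 p.2) := contDiff_A hu 1
  have cu2 : ContDiff ℝ (⊤ : ℕ∞) (fun p : ℝ × ℝ => A u 2 p.1 p.2) := contDiff_A hu 2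
  have cu3 : ContDiff ℝ (⊤ : ℕ∞) (fun p : ℝ × ℝ => A u 3 p.1 p.2) := contDiff_A hu 3
  have cu4 : ContDiff ℝ (⊤ : ℕ∞) (fun p : ℝ × ℝ => A u 4 p.1 p.2) := contDiff_A hu 4
  have cu6 : ContDiff ℝ (⊤ : ℕ∞) (fun p : ℝ × ℝ => A u 6 p.1 p.2) := contDiff_A hu 6
  have cv0 : ContDiff ℝ (⊤ : ℕ∞) (fun p : ℝ × ℝ => A v 0 p.1 p.2) := contDiff_A hv 0
  have cv1 : ContDiff ℝ (⊤ : ℕ∞) (fun p : ℝ × ℝ => A v 1 p.1 p.2) := contDiff_A hv 1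
  have cv2 : ContDiff ℝ (⊤ : ℕ∞) (fun p : ℝ × ℝ => A v 2 p.1 p.2) := contDiff_A hv 2
  have cv3 : ContDiff ℝ (⊤ : ℕ∞) (fun p : ℝ × ℝ => A v 3 p.1 p.2) := contDiff_A hv 3
  have cv4 : ContDiff ℝ (⊤ : ℕ∞) (fun p : ℝ × ℝ => A v 4 p.1 p.2) := contDiff_A hv 4
  have cv6 : ContDiff ℝ (⊤ : ℕ∞) (fun p : ℝ × ℝ => A v 6 p.1 p.2) := contDiff_A hv 6
  exact (((((((((((((((contDiff_const.mul cv6).add (contDiff_const.mul ((cv2.mul cv2).add (cv1.mul cv3)))).add (contDiff_const.mul ((cv1.mul cv3).add (cv0.mul cv4)))).add (contDiff_const.mul ((((cv1.mul cv0).add (cv0.mul cv1)).mul cv1).add ((cv0.mul cv0).mul cv2)))).add (contDiff_const.mul cu6)).add (contDiff_const.mul ((cu4.mul cv0).add (cu3.mul cv1)))).add (contDiff_const.mul ((cu3.mul cv1).add (cu2.mul cv2)))).add (contDiff_const.mul ((cu2.mul cv2).add (cu1.mul cv3)))).add (contDiff_const.mul ((((cu2.mul cv0).add (cu1.mul cv1)).mul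 cv0).add ((cu1.mul cv0).mul cv1)))).add (contDiff_const.mul ((cu2.mul cu2).add (cu1.mul cu3)))).add (contDiff_const.mul ((cu1.mul cv3).add (cu0.mul cv4)))).add (contDiff_const.mul ((((cu1.mul cv0).add (cu0.mul cv1)).mul cv1).add ((cu0.mul cv0).mul cv2)))).add (contDiff_const.mul ((cu1.mul cu3).add (cu0.mul cu4)))).add (contDiff_const.mul ((((cu1.mul cu1).add (cu0.mul cu2)).mul cv0).add ((cu0.mul cu1).mul cv1)))).add (contDiff_const.mul ((((cu1.mul cu0).add (cu0.mul cu1)).mul cv1).add ((cu0.mul cu0).mul cv2))))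

theorem contDiff_HH (u v : ℝ → ℝ → ℝ) (hu : ContDiff ℝ (⊤ : ℕ∞) (Function.uncurry u))
    (hv : ContDiff ℝ (⊤ : ℕ∞) (Function.uncurry v)) :
    ContDiff ℝ (⊤ : ℕ∞) (fun p : ℝ × ℝ => HH u v p.1 p.2) := by
  have cu0 : ContDiff ℝ (⊤ : ℕ∞) (fun p : ℝ × ℝ => A u 0 p.1 p.2) := contDiff_A hu 0
  have cu1 : ContDiff ℝ (⊤ : ℕ∞) (fun p : ℝ × ℝ => A u 1 p.1 p.2) := contDiff_A hu 1
  have cv0 : ContDiff ℝ (⊤ : ℕ∞) (fun p : ℝ × ℝ => A v 0 p.1 p.2) := contDiff_A hv 0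
  have cv1 : ContDiff ℝ (⊤ : ℕ∞) (fun p : ℝ × ℝ => A v 1 p.1 p.2) := contDiff_A hv 1
  exact (((((((contDiff_const.mul (cv1.mul cv1)).add (contDiff_const.mul ((cv0.mul cv0).mul cv0))).add (contDiff_const.mul (cu1.mul cv1))).add (contDiff_const.mul (cu1.mul cu1))).add (contDiff_const.mul ((cu0.mul cv0).mul cv0))).add (contDiff_const.mul ((cu0.mul cu0).mul cv0))).add (contDiff_const.mul ((cu0.mul cu0).mul cu0)))

theorem contDiff_GG (u v : ℝ → ℝ → ℝ) (hu : ContDiff ℝ (⊤ : ℕ∞) (Function.uncurry u))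
    (hv : ContDiff ℝ (⊤ : ℕ∞) (Function.uncurry v)) :
    ContDiff ℝ (⊤ : ℕ∞) (fun p : ℝ × ℝ => GG u v p.1 p.2) := by
  have cu0 : ContDiff ℝ (⊤ : ℕ∞) (fun p : ℝ × ℝ => A u 0 p.1 p.2) := contDiff_A hu 0
  have cu1 : ContDiff ℝ (⊤ : ℕ∞) (fun p : ℝ × ℝ => A u 1 p.1 p.2) := contDiff_A hu 1
  have cu2 : ContDiff ℝ (⊤ : ℕ∞) (fun p : ℝ × ℝ => A u 2 p.1 p.2) := contDiff_A hu 2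
  have cu3 : ContDiff ℝ (⊤ : ℕ∞) (fun p : ℝ × ℝ => A u 3 p.1 p.2) := contDiff_A hu 3
  have cu4 : ContDiff ℝ (⊤ : ℕ∞) (fun p : ℝ × ℝ => A u 4 p.1 p.2) := contDiff_A hu 4
  have cu5 : ContDiff ℝ (⊤ : ℕ∞) (fun p : ℝ × ℝ => A u 5 p.1 p.2) := contDiff_A hu 5
  have cv0 : ContDiff ℝ (⊤ : ℕ∞) (fun p : ℝ × ℝ => A v 0 p.1 p.2) := contDiff_A hv 0
  have cv1 : ContDiff ℝ (⊤ : ℕ∞) (fun p : ℝ × ℝ => A v 1 p.1 p.2) := contDiff_A hv 1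
  have cv2 : ContDiff ℝ (⊤ : ℕ∞) (fun p : ℝ × ℝ => A v 2 p.1 p.2) := contDiff_A hv 2
  have cv3 : ContDiff ℝ (⊤ : ℕ∞) (fun p : ℝ × ℝ => A v 3 p.1 p.2) := contDiff_A hv 3
  have cv4 : ContDiff ℝ (⊤ : ℕ∞) (fun p : ℝ × ℝ => A v 4 p.1 p.2) := contDiff_A hv 4
  have cv5 : ContDiff ℝ (⊤ : ℕ∞) (fun p : ℝ × ℝ => A v 5 p.1 p.2) := contDiff_A hv 5
  exact ((((((((((((((((((((((((((((((((((((((((((((((((((((((((((((contDiff_const.mul (cv3.mul cv3)).add (contDiff_const.mul (cv2.mul cv4))).add (contDiff_const.mul (cv1.mul cv5))).add (contDiff_const.mul ((cv1.mul cv1).mul cv2))).add (contDiff_const.mul ((cv0.mul cv2).mul cv2))).add (contDiff_const.mul ((cv0.mul cv1).mul cv3))).add (contDiff_const.mul ((cv0.mul cv0).mul cv4))).add (contDiff_const.mul (((cv0.mul cv0).mul cv1).mul cv1))).add (contDiff_const.mul (((cv0.mul cv0).mul cv0).mul cv2))).add (contDiff_const.mul ((((cv0.mul cv0).mul cv0).mul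 cv0).mul cv0))).add (contDiff_const.mul (cu5.mul cv1))).add (contDiff_const.mul (cu4.mul cv2))).add (contDiff_const.mul ((cu4.mul cv0).mul cv0))).add (contDiff_const.mul (cu3.mul cv3))).add (contDiff_const.mul ((cu3.mul cv0).mul cv1))).add (contDiff_const.mul (cu3.mul cu3))).add (contDiff_const.mul (cu2.mul cv4))).add (contDiff_const.mul ((cu2.mul cv1).mul cv1))).add (contDiff_const.mul ((cu2.mul cv0).mul cv2))).add (contDiff_const.mul (((cu2.mul cv0).mul cv0).mul cv0))).add (contDiff_const.mul (cu2.mul cu4))).add (contDiff_const.mul ((cu2.mul cu2).mul cv0))).add (contDiff_const.mul (cu1.mul cv5))).add (contDiff_const.mul ((cu1.mul cv1).mul cv2))).add (contDiff_const.mul ((cu1.mul cv0).mul cv3))).add (contDiff_const.mul (((cu1.mul cv0).mul cv0).mul cv1))).add (contDiff_const.mul (cu1.mul cu5))).add (contDiff_const.mul ((cu1.mul cu3).mul cv0))).add (contDiff_const.mul ((cu1.mul cu2).mul cv1))).add (contDiff_const.mul ((cu1.mul cu1).mul cv2))).add (contDiff_const.mul (((cu1.mul cu1).mul cv0).mul cv0))).add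 (contDiff_const.mul ((cu1.mul cu1).mul cu2))).add (contDiff_const.mul ((cu0.mul cv2).mul cv2))).add (contDiff_const.mul ((cu0.mul cv1).mul cv3))).add (contDiff_const.mul ((cu0.mul cv0).mul cv4))).add (contDiff_const.mul (((cu0.mul cv0).mul cv1).mul cv1))).add (contDiff_const.mul (((cu0.mul cv0).mul cv0).mul cv2))).add (contDiff_const.mul ((((cu0.mul cv0).mul cv0).mul cv0).mul cv0))).add (contDiff_const.mul ((cu0.mul cu4).mul cv0))).add (contDiff_const.mul ((cu0.mul cu3).mul cv1))).add (contDiff_const.mul ((cu0.mul cu2).mul cv2))).add (contDiff_const.mul (((cu0.mul cu2).mul cv0).mul cv0))).add (contDiff_const.mul ((cu0.mul cu2).mul cu2))).add (contDiff_const.mul ((cu0.mul cu1).mul cv3))).add (contDiff_const.mul (((cu0.mul cu1).mul cv0).mul cv1))).add (contDiff_const.mul ((cu0.mul cu1).mul cu3))).add (contDiff_const.mul (((cu0.mul cu1).mul cu1).mul cv0))).add (contDiff_const.mul ((cu0.mul cu0).mul cv4))).add (contDiff_const.mul (((cu0.mul cu0).mul cv1).mul cv1))).add (contDiff_const.mul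 (((cu0.mul cu0).mul cv0).mul cv2))).add (contDiff_const.mul ((((cu0.mul cu0).mul cv0).mul cv0).mul cv0))).add (contDiff_const.mul ((cu0.mul cu0).mul cu4))).add (contDiff_const.mul (((cu0.mul cu0).mul cu2).mul cv0))).add (contDiff_const.mul (((cu0.mul cu0).mul cu1).mul cv1))).add (contDiff_const.mul (((cu0.mul cu0).mul cu1).mul cu1))).add (contDiff_const.mul (((cu0.mul cu0).mul cu0).mul cv2))).add (contDiff_const.mul ((((cu0.mul cu0).mul cu0).mul cv0).mul cv0))).add (contDiff_const.mul (((cu0.mul cu0).mul cu0).mul cu2))).add (contDiff_const.mul ((((cu0.mul cu0).mul cu0).mul cu0).mul cv0))).add (contDiff_const.mul ((((cu0.mul cu0).mul cu0).mul cu0).mul cu0)))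

theorem contDiff_HT (u v : ℝ → ℝ → ℝ) (hu : ContDiff ℝ (⊤ : ℕ∞) (Function.uncurry u))
    (hv : ContDiff ℝ (⊤ : ℕ∞) (Function.uncurry v)) :
    ContDiff ℝ (⊤ : ℕ∞) (fun p : ℝ × ℝ => HT u v p.1 p.2) := by
  have cu0 : ContDiff ℝ (⊤ : ℕ∞) (fun p : ℝ × ℝ => A u 0 p.1 p.2) := contDiff_A hu 0
  have cu1 : ContDiff ℝ (⊤ : ℕ∞) (fun p : ℝ × ℝ => A u 1 p.1 p.2) := contDiff_A hu 1
  have cv0 : ContDiff ℝ (⊤ : ℕ∞) (fun p : ℝ × ℝ => A v 0 p.1 p.2) := contDiff_A hv 0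
  have cv1 : ContDiff ℝ (⊤ : ℕ∞) (fun p : ℝ × ℝ => A v 1 p.1 p.2) := contDiff_A hv 1
  have cQU := contDiff_QU u v hu hv
  have cQV := contDiff_QV u v hu hv
  have cQUp := contDiff_QUp u v hu hv
  have cQVp := contDiff_QVp u v hu hv
  exact (((((((contDiff_const.mul ((cQVp.mul cv1).add (cv1.mul cQVp))).add (contDiff_const.mul ((((cQV.mul cv0).add (cv0.mul cQV)).mul cv0).add ((cv0.mul cv0).mul cQV)))).add (contDiff_const.mul ((cQUp.mul cv1).add (cu1.mul cQVp)))).add (contDiff_const.mul ((cQUp.mul cu1).add (cu1.mul cQUp)))).add (contDiff_const.mul ((((cQU.mul cv0).add (cu0.mul cQV)).mul cv0).add ((cu0.mul cv0).mul cQV)))).add (contDiff_const.mul ((((cQU.mul cu0).add (cu0.mul cQU)).mul cv0).add ((cu0.mul cu0).mul cQV)))).add (contDiff_const.mul ((((cQU.mul cu0).add (cu0.mul cQU)).mul cu0).add ((cu0.mul cu0).mul cQU))))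

theorem hasDerivAt_HH_t (u v : ℝ → ℝ → ℝ) (x t : ℝ)
    (hut0 : HasDerivAt (fun s => A u 0 x s) (QU u v x t) t)
    (hut1 : HasDerivAt (fun s => A u 1 x s) (QU' u v x t) t)
    (hvt0 : HasDerivAt (fun s => A v 0 x s) (QV u v x t) t)
    (hvt1 : HasDerivAt (fun s => A v 1 x s) (QV' u v x t) t) :
    HasDerivAt (fun s => HH u v x s) (HT u v x t) t := by
  have tu0 := hut0
  have tu1 := hut1
  have tv0 := hvt0
  have tv1 := hvt1
  exact (((((((HasDerivAt.const_mul ((-2 : ℝ) / 27) (tv1.mul tv1)).add (HasDerivAt.const_mul ((7 : ℝ) / 162) ((tv0.mul tv0).mul tv0))).add (HasDerivAt.const_mul ((5 : ℝ) / 9) (tu1.mul tv1))).add (HasDerivAt.const_mul ((-1 : ℝ)) (tu1.mul tu1))).add (HasDerivAt.const_mul ((-5 : ℝ) / 9) ((tu0.mul tv0).mul tv0))).add (HasDerivAt.const_mul ((20 : ℝ) / 9) ((tu0.mul tu0).mul tv0))).add (HasDerivAt.const_mul ((-8 : ℝ) / 3) ((tu0.mul tu0).mul tu0)))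

theorem HH_zero (u v : ℝ → ℝ → ℝ) (x t : ℝ)
    (hzu : ∀ n, A u n x t = 0) (hzv : ∀ n, A v n x t = 0) : HH u v x t = 0 := by
  simp [HH, hzu, hzv]

theorem GG_zero (u v : ℝ → ℝ → ℝ) (x t : ℝ)
    (hzu : ∀ n, A u n x t = 0) (hzv : ∀ n, A v n x t = 0) : GG u v x t = 0 := by
  simp [GG, hzu, hzv]

theorem HT_zero (u v : ℝ → ℝ → ℝ) (x t : ℝ)
    (hzu : ∀ n, A u n x t = 0) (hzv : ∀ n, A v n x t = 0) : HT u v x t = 0 := by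
  simp [HT, QU, QV, QU', QV', hzu, hzv]

theorem key_identity (u v : ℝ → ℝ → ℝ) (x t : ℝ) : HT u v x t = GG' u v x t := by
  unfold HT GG' QU QV QU' QV'
  ring

theorem Q1u_eq (u v : ℝ → ℝ → ℝ) (hu : ContDiff ℝ (⊤ : ℕ∞) (Function.uncurry u))
    (hv : ContDiff ℝ (⊤ : ℕ∞) (Function.uncurry v)) (x t : ℝ) :
    Q1u (fun y => u y t) (fun y => v y t) x = QU u v x t := by
  have h1u : deriv (fun y => u y t) x = A u 1 x t := by
    rw [← iteratedDeriv_one]; exact iteratedDeriv_slice hu 1 x t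
  have h1v : deriv (fun y => v y t) x = A v 1 x t := by
    rw [← iteratedDeriv_one]; exact iteratedDeriv_slice hv 1 x t
  simp only [Q1u, QU, iteratedDeriv_slice hu, iteratedDeriv_slice hv, h1u, h1v]
  simp only [A_zero]
  ring

theorem Q1v_eq (u v : ℝ → ℝ → ℝ) (hu : ContDiff ℝ (⊤ : ℕ∞) (Function.uncurry u))
    (hv : ContDiff ℝ (⊤ : ℕ∞) (Function.uncurry v)) (x t : ℝ) :
    Q1v (fun y => u y t) (fun y => v y t) x = QV u v x t := by
  have h1u : deriv (fun y => u y t) x = A u 1 x t := by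
    rw [← iteratedDeriv_one]; exact iteratedDeriv_slice hu 1 x t
  have h1v : deriv (fun y => v y t) x = A v 1 x t := by
    rw [← iteratedDeriv_one]; exact iteratedDeriv_slice hv 1 x t
  simp only [Q1v, QV, iteratedDeriv_slice hu, iteratedDeriv_slice hv, h1u, h1v]
  simp only [A_zero]
  ring

theorem integral_deriv_eq_zero' (f : ℝ → ℝ) (hf : ContDiff ℝ 1 f)
    (h2 : HasCompactSupport f) : ∫ x : ℝ, deriv f x = 0 := by
  have hint : Integrable (deriv f) :=
    (hf.continuous_deriv le_rfl).integrable_of_hasCompactSupport h2.deriv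
  have h := MeasureTheory.integral_add_compl (measurableSet_Iic (a := (0 : ℝ))) hint
  rw [← h, Set.compl_Iic, h2.integral_Iic_deriv_eq hf 0, h2.integral_Ioi_deriv_eq hf 0]
  ring
/-- For any smooth solution `(u, v)` of the first commuting flow
`u_{t₁} = Q₁ᵘ, v_{t₁} = Q₁ᵛ` whose `x`-supports are contained in a fixed compact set
`K` for all times, the functional
`ℋ₂ = ∫ ((7/162)v³ − (8/3)u³ − (5/9)v²u + (20/9)u²v − u_x² + (5/9)u_x v_x − (2/27)v_x²) dx`
is conserved. -/
theorem first_flow_conserved_H2 (u v : ℝ → ℝ → ℝ)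
    (hu : ContDiff ℝ (⊤ : ℕ∞) (Function.uncurry u)) (hv : ContDiff ℝ (⊤ : ℕ∞) (Function.uncurry v))
    (hut : ∀ x t : ℝ, deriv (fun s => u x s) t = Q1u (fun y => u y t) (fun y => v y t) x)
    (hvt : ∀ x t : ℝ, deriv (fun s => v x s) t = Q1v (fun y => u y t) (fun y => v y t) x)
    (K : Set ℝ) (hK : IsCompact K)
    (hsupp : ∀ t : ℝ, (Function.support fun x => u x t) ⊆ K ∧
                      (Function.support fun x => v x t) ⊆ K) :
    ∀ t₁ t₂ : ℝ,
      (∫ x : ℝ,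
        ((7 / 162) * (v x t₁) ^ 3 - (8 / 3) * (u x t₁) ^ 3
          - (5 / 9) * (v x t₁) ^ 2 * u x t₁ + (20 / 9) * (u x t₁) ^ 2 * v x t₁
          - (deriv (fun y => u y t₁) x) ^ 2
          + (5 / 9) * deriv (fun y => u y t₁) x * deriv (fun y => v y t₁) x
          - (2 / 27) * (deriv (fun y => v y t₁) x) ^ 2))
      = ∫ x : ℝ,
        ((7 / 162) * (v x t₂) ^ 3 - (8 / 3) * (u x t₂) ^ 3
          - (5 / 9) * (v x t₂) ^ 2 * u x t₂ + (20 / 9) * (u x t₂) ^ 2 * v x t₂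
          - (deriv (fun y => u y t₂) x) ^ 2
          + (5 / 9) * deriv (fun y => u y t₂) x * deriv (fun y => v y t₂) x
          - (2 / 27) * (deriv (fun y => v y t₂) x) ^ 2) := by
  have hHHeq : ∀ t : ℝ, (fun x =>
        ((7 / 162) * (v x t) ^ 3 - (8 / 3) * (u x t) ^ 3
          - (5 / 9) * (v x t) ^ 2 * u x t + (20 / 9) * (u x t) ^ 2 * v x t
          - (deriv (fun y => u y t) x) ^ 2
          + (5 / 9) * deriv (fun y => u y t) x * deriv (fun y => v y t) x
          - (2 / 27) * (deriv (fun y => v y t) x) ^ 2))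
      = fun x => HH u v x t := by
    intro t; funext x
    have h1u : deriv (fun y => u y t) x = A u 1 x t := by
      rw [← iteratedDeriv_one]; exact iteratedDeriv_slice hu 1 x t
    have h1v : deriv (fun y => v y t) x = A v 1 x t := by
      rw [← iteratedDeriv_one]; exact iteratedDeriv_slice hv 1 x t
    simp only [HH, h1u, h1v, A_zero]
    ring
  have hzu : ∀ t x, x ∉ K → ∀ n, A u n x t = 0 := fun t x hx n =>
    Function.notMem_support.mp
      (fun hmem => hx (support_A hK.isClosed (fun s => (hsupp s).1) n t hmem))
  have hzv : ∀ t x, x ∉ K → ∀ n, A v n x t = 0 := fun t x hx n =>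
    Function.notMem_support.mp
      (fun hmem => hx (support_A hK.isClosed (fun s => (hsupp s).2) n t hmem))
  have hcs : ∀ f : ℝ → ℝ, (∀ x, x ∉ K → f x = 0) → HasCompactSupport f := fun f hf =>
    HasCompactSupport.intro hK hf
  have contHH : Continuous fun p : ℝ × ℝ => HH u v p.1 p.2 := (contDiff_HH u v hu hv).continuous
  have contHT : Continuous fun p : ℝ × ℝ => HT u v p.1 p.2 := (contDiff_HT u v hu hv).continuous
  have contHH' : Continuous (Function.uncurry (HH u v)) := (contDiff_HH u v hu hv).continuous
  have contHT' : Continuous (Function.uncurry (HT u v)) := (contDiff_HT u v hu hv).continuous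
  have sliceHH : ∀ t : ℝ, Continuous fun x => HH u v x t := fun t =>
    Continuous.uncurry_right t contHH'
  have sliceHT : ∀ t : ℝ, Continuous fun x => HT u v x t := fun t =>
    Continuous.uncurry_right t contHT'
  have hQUeq : ∀ x t, pdt u x t = QU u v x t := fun x t => by
    show deriv (fun s => u x s) t = _
    rw [hut x t, Q1u_eq u v hu hv x t]
  have hQVeq : ∀ x t, pdt v x t = QV u v x t := fun x t => by
    show deriv (fun s => v x s) t = _
    rw [hvt x t, Q1v_eq u v hu hv x t]
  have hut0 : ∀ x t, HasDerivAt (fun s => A u 0 x s) (QU u v x t) t := fun x t => by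
    rw [A_zero]
    exact (hQUeq x t) ▸ hasDerivAt_pdt hu x t
  have hvt0 : ∀ x t, HasDerivAt (fun s => A v 0 x s) (QV u v x t) t := fun x t => by
    rw [A_zero]
    exact (hQVeq x t) ▸ hasDerivAt_pdt hv x t
  have hut1 : ∀ x t, HasDerivAt (fun s => A u 1 x s) (QU' u v x t) t := by
    intro x t
    have e : pdt (A u 1) x t = QU' u v x t := by
      rw [A_succ u 0, clairaut (contDiff_A hu 0) x t]
      show deriv (fun y => pdt (A u 0) y t) x = _
      have h2 : (fun y => pdt (A u 0) y t) = fun y => QU u v y t := by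
        funext y; rw [A_zero]; exact hQUeq y t
      rw [h2]
      exact (hasDerivAt_QU_x u v hu hv x t).deriv
    exact e ▸ hasDerivAt_pdt (contDiff_A hu 1) x t
  have hvt1 : ∀ x t, HasDerivAt (fun s => A v 1 x s) (QV' u v x t) t := by
    intro x t
    have e : pdt (A v 1) x t = QV' u v x t := by
      rw [A_succ v 0, clairaut (contDiff_A hv 0) x t]
      show deriv (fun y => pdt (A v 0) y t) x = _
      have h2 : (fun y => pdt (A v 0) y t) = fun y => QV u v y t := by
        funext y; rw [A_zero]; exact hQVeq y t
      rw [h2]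
      exact (hasDerivAt_QV_x u v hu hv x t).deriv
    exact e ▸ hasDerivAt_pdt (contDiff_A hv 1) x t
  have hHHt : ∀ x t, HasDerivAt (fun s => HH u v x s) (HT u v x t) t := fun x t =>
    hasDerivAt_HH_t u v x t (hut0 x t) (hut1 x t) (hvt0 x t) (hvt1 x t)
  have hHTzero : ∀ t : ℝ, ∫ x : ℝ, HT u v x t = 0 := by
    intro t
    have hGf : (fun x => HT u v x t) = deriv (fun y => GG u v y t) := by
      funext x
      rw [key_identity, ← (hasDerivAt_GG_x u v hu hv x t).deriv]
    rw [hGf]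
    refine integral_deriv_eq_zero' _ ?_ ?_
    · exact ((contDiff_GG u v hu hv).comp
        ((contDiff_id.prodMk contDiff_const) :
          ContDiff ℝ (⊤ : ℕ∞) fun y : ℝ => ((y, t) : ℝ × ℝ))).of_le (by simp)
    · exact hcs _ fun x hx => GG_zero u v x t (hzu t x hx) (hzv t x hx)
  have hder : ∀ t₀ : ℝ, HasDerivAt (fun t => ∫ x : ℝ, HH u v x t) 0 t₀ := by
    intro t₀
    obtain ⟨C, hC⟩ : ∃ C : ℝ, ∀ p ∈ K ×ˢ Set.Icc (t₀ - 1) (t₀ + 1),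
        ‖HT u v p.1 p.2‖ ≤ C :=
      (hK.prod isCompact_Icc).exists_bound_of_continuousOn contHT.continuousOn
    have hbound : ∀ᵐ x : ℝ ∂(volume : Measure ℝ), ∀ s ∈ Metric.ball t₀ 1,
        ‖HT u v x s‖ ≤ K.indicator (fun _ => C) x := by
      refine Filter.Eventually.of_forall fun x => fun s hs => ?_
      by_cases hx : x ∈ K
      · rw [Set.indicator_of_mem hx]
        refine hC (x, s) ⟨hx, ?_⟩
        have h1 := Metric.mem_ball.mp hs
        rw [Real.dist_eq] at h1
        have h3 := abs_lt.mp h1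
        exact ⟨by linarith [h3.1], by linarith [h3.2]⟩
      · rw [Set.indicator_of_notMem hx]
        have h0 : HT u v x s = 0 := HT_zero u v x s (hzu s x hx) (hzv s x hx)
        simp [h0]
    have hmeas : ∀ᶠ s in nhds t₀,
        AEStronglyMeasurable (fun x => HH u v x s) (volume : Measure ℝ) :=
      Filter.Eventually.of_forall fun s => (sliceHH s).aestronglyMeasurable
    have hint : Integrable (fun x => HH u v x t₀) (volume : Measure ℝ) :=
      (sliceHH t₀).integrable_of_hasCompactSupport
        (hcs _ fun x hx => HH_zero u v x t₀ (hzu t₀ x hx) (hzv t₀ x hx))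
    have hmeas' : AEStronglyMeasurable (fun x => HT u v x t₀) (volume : Measure ℝ) :=
      (sliceHT t₀).aestronglyMeasurable
    have bint : Integrable (K.indicator fun _ => C) (volume : Measure ℝ) :=
      (MeasureTheory.integrable_indicator_iff hK.measurableSet).mpr
        ((integrableOn_const_iff (C := C)).mpr (Or.inr hK.measure_lt_top))
    have hdiff : ∀ᵐ x : ℝ ∂(volume : Measure ℝ), ∀ s ∈ Metric.ball t₀ 1,
        HasDerivAt (fun s' => HH u v x s') (HT u v x s) s :=
      Filter.Eventually.of_forall fun x s hs => hHHt x s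
    have key := (hasDerivAt_integral_of_dominated_loc_of_deriv_le
      (μ := (volume : Measure ℝ)) (F := fun t x => HH u v x t)
      (F' := fun t x => HT u v x t) (bound := K.indicator fun _ => C)
      (Metric.ball_mem_nhds t₀ one_pos) hmeas hint hmeas' hbound bint hdiff).2
    rwa [hHTzero t₀] at key
  intro t₁ t₂
  rw [hHHeq t₁, hHHeq t₂]
  exact is_const_of_deriv_eq_zero (f := fun t => ∫ x : ℝ, HH u v x t)
    (fun t => (hder t).differentiableAt)
    (fun t => (hder t).deriv) t₁ t₂
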